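/- arXiv:2511.04932 — 6 statements merged into one kernel-verified Lean document; each statement's English description precedes it below -/
import Mathlib

section
/- Gordan's lemma: For any real m×n matrix A, exactly one of the following holds: (1) there exists x ∈ ℝ^n with (Ax)_k > 0 for all k; or (2) there exists y ∈ ℝ^m, y ≠ 0, with y_k ≥ 0 for all k and A^T y = 0. -/
theorem gordan_lemma (m n : ℕ) (A : Matrix (Fin m) (Fin n) ℝ) :
    Xor'
      (∃ x : Fin n → ℝ, ∀ k, 0 < A.mulVec x k)
      (∃ y : Fin m → ℝ, y ≠ 0 ∧ (∀ k, 0 ≤ y k) ∧ A.transpose.mulVec y = 0) := by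
  -- the two alternatives are mutually exclusive
  have hnotboth : ¬ ((∃ x : Fin n → ℝ, ∀ k, 0 < A.mulVec x k) ∧
      (∃ y : Fin m → ℝ, y ≠ 0 ∧ (∀ k, 0 ≤ y k) ∧ A.transpose.mulVec y = 0)) := by
    rintro ⟨⟨x, hx⟩, ⟨y, hy0, hynn, hAty⟩⟩
    -- consider ∑ k, y k * (A x) k = ∑ j, (Aᵀ y) j * x j = 0
    have key : ∑ k, y k * A.mulVec x k = 0 := by
      have : ∑ k, y k * A.mulVec x k = ∑ j, A.transpose.mulVec y j * x j := by
        simp only [Matrix.mulVec, dotProduct, Matrix.transpose_apply,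
          Finset.mul_sum, Finset.sum_mul]
        rw [Finset.sum_comm]
        congr 1; ext j; congr 1; ext k; ring
      rw [this, hAty]
      simp
    -- but it is positive, since y ≠ 0, y ≥ 0, A x > 0
    obtain ⟨k₀, hk₀⟩ : ∃ k, y k ≠ 0 := by
      by_contra h
      push_neg at h
      exact hy0 (funext fun k => h k)
    have hpos : 0 < ∑ k, y k * A.mulVec x k := by
      apply Finset.sum_pos' (fun k _ => mul_nonneg (hynn k) (hx k).le)
      exact ⟨k₀, Finset.mem_univ _, mul_pos (lt_of_le_of_ne (hynn k₀) (Ne.symm hk₀)) (hx k₀)⟩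
    linarith
  by_cases h0 : (0 : Fin n → ℝ) ∈ convexHull ℝ (Set.range fun i => A i)
  · -- 0 is a convex combination of the rows: second alternative holds
    right
    rw [convexHull_range_eq_exists_affineCombination] at h0
    obtain ⟨s, w, hw0, hw1, hcomb⟩ := h0
    rw [Finset.affineCombination_eq_linear_combination _ _ _ hw1] at hcomb
    have hy : ∃ y : Fin m → ℝ, y ≠ 0 ∧ (∀ k, 0 ≤ y k) ∧ A.transpose.mulVec y = 0 := by
      refine ⟨fun i => if i ∈ s then w i else 0, ?_, fun k => ?_, ?_⟩
      · intro h
        have : ∑ i ∈ s, w i = 0 := by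
          calc ∑ i ∈ s, w i = ∑ i ∈ s, (if i ∈ s then w i else 0) := by
                apply Finset.sum_congr rfl; intro i hi; simp [hi]
            _ = ∑ i ∈ s, (0 : ℝ) := by
                apply Finset.sum_congr rfl; intro i hi
                exact congrFun h i
            _ = 0 := by simp
        rw [hw1] at this; linarith
      · dsimp only; split
        · exact hw0 _ ‹_›
        · exact le_refl 0
      · funext j
        simp only [Matrix.mulVec, dotProduct, Matrix.transpose_apply, Pi.zero_apply]
        have := congrFun hcomb j
        simp only [Finset.sum_apply, Pi.smul_apply, smul_eq_mul, Pi.zero_apply] at this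
        calc ∑ i, A i j * (if i ∈ s then w i else 0)
            = ∑ i, (if i ∈ s then w i * A i j else 0) := by
              apply Finset.sum_congr rfl; intro i _; split <;> simp [mul_comm]
          _ = ∑ i ∈ s, w i * A i j := by rw [Finset.sum_ite_mem, Finset.univ_inter]
          _ = 0 := this
    exact ⟨hy, fun h => hnotboth ⟨h, hy⟩⟩
  · -- separate 0 from the convex hull of the rows: first alternative holds
    left
    have hconv : Convex ℝ (convexHull ℝ (Set.range fun i => A i)) := convex_convexHull _ _
    have hclosed : IsClosed (convexHull ℝ (Set.range fun i => A i)) :=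
      (Set.finite_range _).isClosed_convexHull ℝ
    obtain ⟨f, u, hfu, hmem⟩ := geometric_hahn_banach_point_closed hconv hclosed h0
    have hu : 0 < u := by simpa using hfu
    set x : Fin n → ℝ := fun j => f (fun i => if i = j then (1 : ℝ) else 0) with hxdef
    have hf : ∀ v : Fin n → ℝ, f v = ∑ j, v j * x j := by
      intro v
      have hv : v = ∑ j, v j • (fun i => if i = j then (1 : ℝ) else 0) := by
        funext i
        simp only [Finset.sum_apply, Pi.smul_apply, smul_eq_mul, mul_ite, mul_one, mul_zero]
        simp
      calc f v = f (∑ j, v j • (fun i => if i = j then (1 : ℝ) else 0)) := by rw [← hv]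
        _ = ∑ j, v j * x j := by
            rw [map_sum]
            apply Finset.sum_congr rfl
            intro j _
            rw [map_smul]
            rfl
    have hx : ∃ x : Fin n → ℝ, ∀ k, 0 < A.mulVec x k := by
      refine ⟨x, fun k => ?_⟩
      have hAk : A k ∈ convexHull ℝ (Set.range fun i => A i) :=
        subset_convexHull _ _ ⟨k, rfl⟩
      have := hmem _ hAk
      have hfk : f (A k) = A.mulVec x k := by
        rw [hf]
        simp [Matrix.mulVec, dotProduct]
      linarith [hu]
    exact ⟨hx, fun h => hnotboth ⟨hx, h⟩⟩
end

section
/- Let σ : ℝ → ℝ satisfy lim_{x→-∞} σ(x) = 0 and lim_{x→+∞} σ(x) = 1. Then for every function Ψ : {0,1}^K → ℝ and every ε > 0, there exist N_h ∈ ℕ, coefficients c ∈ ℝ^{N_h}, biases b ∈ ℝ^{N_h}, and weights W ∈ ℝ^{N_h × K} such that |∑_{α=1}^{N_h} c_α σ(b_α + ∑_k W_{αk} n_k) − Ψ(n)| < ε for every n ∈ {0,1}^K. Moreover, N_h = 2^K suffices. -/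
theorem fnn_universal_approximation
    (K : ℕ) (hK : 0 < K)
    (σ : ℝ → ℝ)
    (h0 : Filter.Tendsto σ Filter.atBot (nhds 0))
    (h1 : Filter.Tendsto σ Filter.atTop (nhds 1))
    (Ψ : (Fin K → ℝ) → ℝ) (ε : ℝ) (hε : 0 < ε) :
    ∃ (c b : Fin (2 ^ K) → ℝ) (W : Fin (2 ^ K) → Fin K → ℝ),
      ∀ n : Fin K → ℝ, (∀ k, n k = 0 ∨ n k = 1) →
        |(∑ α, c α * σ (b α + ∑ k, W α k * n k)) - Ψ n| < ε := by
  classical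
  set e : (Fin K → Fin 2) ≃ Fin (2 ^ K) := finFunctionFinEquiv with he
  set v : Fin (2 ^ K) → Fin K → ℝ := fun α k => ((e.symm α k : ℕ) : ℝ) with hv
  have hv01 : ∀ α k, v α k = 0 ∨ v α k = 1 := by
    intro α k
    have h2 : (e.symm α k : ℕ) < 2 := (e.symm α k).isLt
    interval_cases h : (e.symm α k : ℕ) <;> simp [hv, h]
  set S : ℝ := ∑ α, |Ψ (v α)| with hSdef
  have hS0 : 0 ≤ S := Finset.sum_nonneg fun α _ => abs_nonneg _
  set δ : ℝ := ε / (S + 1) with hδdef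
  have hδ : 0 < δ := div_pos hε (by linarith)
  -- thresholds
  have hh1 : ∀ᶠ x in Filter.atTop, |σ x - 1| < δ := by
    have := (Metric.tendsto_nhds.mp h1) δ hδ
    simpa [Real.dist_eq] using this
  have hh0 : ∀ᶠ x in Filter.atBot, |σ x| < δ := by
    have := (Metric.tendsto_nhds.mp h0) δ hδ
    simpa [Real.dist_eq] using this
  obtain ⟨T1, hT1⟩ := Filter.eventually_atTop.mp hh1
  obtain ⟨T0, hT0⟩ := Filter.eventually_atBot.mp hh0
  set t : ℝ := max 1 (max T1 (-T0)) with htdef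
  have ht0 : 0 < t := lt_of_lt_of_le one_pos (le_max_left _ _)
  have htT1 : T1 ≤ t := le_trans (le_max_left _ _) (le_max_right _ _)
  have htT0 : -t ≤ T0 := by
    have : -T0 ≤ t := le_trans (le_max_right _ _) (le_max_right _ _)
    linarith
  refine ⟨fun α => Ψ (v α), fun α => t * (1 - K - ∑ k, (2 * v α k - 1)),
    fun α k => t * (2 * (2 * v α k - 1)), ?_⟩
  intro n hn
  -- the argument of σ in closed form
  have hg : ∀ α, (t * (1 - K - ∑ k, (2 * v α k - 1)) + ∑ k, t * (2 * (2 * v α k - 1)) * n k)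
      = t * ((∑ k, (2 * v α k - 1) * (2 * n k - 1)) - ((K : ℝ) - 1)) := by
    intro α
    have h1' : (∑ k, (2 * v α k - 1) * (2 * n k - 1))
        = (∑ k, 2 * (2 * v α k - 1) * n k) - ∑ k, (2 * v α k - 1) := by
      rw [← Finset.sum_sub_distrib]
      exact Finset.sum_congr rfl fun k _ => by ring
    have h2' : (∑ k, t * (2 * (2 * v α k - 1)) * n k)
        = t * ∑ k, 2 * (2 * v α k - 1) * n k := by
      rw [Finset.mul_sum]
      exact Finset.sum_congr rfl fun k _ => by ring
    rw [h1', h2']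
    ring
  -- the matching index
  set nF : Fin K → Fin 2 := fun k => if n k = 1 then 1 else 0 with hnF
  set α₀ : Fin (2 ^ K) := e nF with hα₀
  have hvα₀ : v α₀ = n := by
    funext k
    rcases hn k with h | h <;> simp [hv, hα₀, hnF, h]
  -- per-term products
  have hterm_le : ∀ (a b : ℝ), (a = 0 ∨ a = 1) → (b = 0 ∨ b = 1) →
      (2 * a - 1) * (2 * b - 1) ≤ 1 := by
    rintro a b (rfl | rfl) (rfl | rfl) <;> norm_num
  have hterm_ne : ∀ (a b : ℝ), (a = 0 ∨ a = 1) → (b = 0 ∨ b = 1) → a ≠ b →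
      (2 * a - 1) * (2 * b - 1) = -1 := by
    rintro a b (rfl | rfl) (rfl | rfl) h <;> simp at h <;> norm_num
  -- matching vertex: argument = t
  have hmatch : (∑ k, (2 * v α₀ k - 1) * (2 * n k - 1)) = (K : ℝ) := by
    rw [hvα₀]
    have : ∀ k ∈ Finset.univ, (2 * n k - 1) * (2 * n k - 1) = 1 := by
      intro k _; rcases hn k with h | h <;> simp [h] <;> ring
    rw [Finset.sum_congr rfl this]
    simp
  -- mismatching vertex: sum ≤ K - 2
  have hmismatch : ∀ α, α ≠ α₀ →
      (∑ k, (2 * v α k - 1) * (2 * n k - 1)) ≤ (K : ℝ) - 2 := by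
    intro α hα
    have hne : v α ≠ n := by
      intro hcontra
      apply hα
      have : e.symm α = nF := by
        funext k
        have hk : v α k = n k := congrFun hcontra k
        rcases hn k with h | h
        · have hkr : ((e.symm α k : ℕ) : ℝ) = 0 := hk.trans h
          have h0' : (e.symm α k : ℕ) = 0 := by exact_mod_cast hkr
          simp [hnF, h]
          omega
        · have hkr : ((e.symm α k : ℕ) : ℝ) = 1 := hk.trans h
          have h1' : (e.symm α k : ℕ) = 1 := by exact_mod_cast hkr
          simp [hnF, h]
          omega
      rw [hα₀, ← this, Equiv.apply_symm_apply]
    obtain ⟨k₀, hk₀⟩ := Function.ne_iff.mp hne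
    rw [← Finset.sum_erase_add _ _ (Finset.mem_univ k₀)]
    have hb1 : (∑ k ∈ Finset.univ.erase k₀, (2 * v α k - 1) * (2 * n k - 1))
        ≤ ((K : ℝ) - 1) := by
      calc (∑ k ∈ Finset.univ.erase k₀, (2 * v α k - 1) * (2 * n k - 1))
          ≤ ∑ k ∈ Finset.univ.erase k₀, (1 : ℝ) :=
            Finset.sum_le_sum fun k _ => hterm_le _ _ (hv01 α k) (hn k)
        _ = ((K : ℝ) - 1) := by
            rw [Finset.sum_const, Finset.card_erase_of_mem (Finset.mem_univ k₀)]
            simp [Nat.cast_sub hK]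
    have hb2 : (2 * v α k₀ - 1) * (2 * n k₀ - 1) = -1 :=
      hterm_ne _ _ (hv01 α k₀) (hn k₀) hk₀
    linarith
  -- bounds on σ values
  have hσmatch : |σ (t * (1 - K - ∑ k, (2 * v α₀ k - 1)) + ∑ k, t * (2 * (2 * v α₀ k - 1)) * n k) - 1| < δ := by
    rw [hg, hmatch]
    have : t * ((K : ℝ) - ((K : ℝ) - 1)) = t := by ring
    rw [this]
    exact hT1 t htT1
  have hσmis : ∀ α, α ≠ α₀ →
      |σ (t * (1 - K - ∑ k, (2 * v α k - 1)) + ∑ k, t * (2 * (2 * v α k - 1)) * n k)| < δ := by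
    intro α hα
    rw [hg]
    apply hT0
    have hs := hmismatch α hα
    have : t * ((∑ k, (2 * v α k - 1) * (2 * n k - 1)) - ((K : ℝ) - 1)) ≤ t * (-1) := by
      apply mul_le_mul_of_nonneg_left _ ht0.le
      linarith
    linarith
  -- assemble
  have hΨn : Ψ (v α₀) = Ψ n := by rw [hvα₀]
  have hsplit : (∑ α, Ψ (v α) * σ (t * (1 - K - ∑ k, (2 * v α k - 1)) + ∑ k, t * (2 * (2 * v α k - 1)) * n k)) - Ψ n
      = ∑ α, (Ψ (v α) * σ (t * (1 - K - ∑ k, (2 * v α k - 1)) + ∑ k, t * (2 * (2 * v α k - 1)) * n k)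
          - if α = α₀ then Ψ n else 0) := by
    rw [Finset.sum_sub_distrib, Finset.sum_ite_eq' Finset.univ α₀ fun _ => Ψ n]
    simp
  rw [hsplit]
  calc |∑ α, (Ψ (v α) * σ (t * (1 - K - ∑ k, (2 * v α k - 1)) + ∑ k, t * (2 * (2 * v α k - 1)) * n k)
          - if α = α₀ then Ψ n else 0)|
      ≤ ∑ α, |Ψ (v α) * σ (t * (1 - K - ∑ k, (2 * v α k - 1)) + ∑ k, t * (2 * (2 * v α k - 1)) * n k)
          - if α = α₀ then Ψ n else 0| := Finset.abs_sum_le_sum_abs _ _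
    _ ≤ ∑ α, |Ψ (v α)| * δ := by
        apply Finset.sum_le_sum
        intro α _
        by_cases hα : α = α₀
        · subst hα
          rw [if_pos rfl]
          have hrw : Ψ (v α₀) * σ (t * (1 - K - ∑ k, (2 * v α₀ k - 1)) + ∑ k, t * (2 * (2 * v α₀ k - 1)) * n k) - Ψ n
              = Ψ (v α₀) * (σ (t * (1 - K - ∑ k, (2 * v α₀ k - 1)) + ∑ k, t * (2 * (2 * v α₀ k - 1)) * n k) - 1) := by
            rw [← hΨn]; ring
          rw [hrw, abs_mul]
          exact mul_le_mul_of_nonneg_left hσmatch.le (abs_nonneg _)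
        · simp only [if_neg hα, sub_zero, abs_mul]
          exact mul_le_mul_of_nonneg_left (hσmis α hα).le (abs_nonneg _)
    _ = S * δ := by rw [← Finset.sum_mul]
    _ < ε := by
        have hS1 : (0:ℝ) < S + 1 := by linarith
        have : S * δ = S * ε / (S + 1) := by rw [hδdef]; ring
        rw [this, div_lt_iff₀ hS1]
        nlinarith
end

section
/- Let σ : ℝ → ℝ with σ(x) → 0 as x → -∞ and σ(x) → 1 as x → +∞. Enumerate the vertices of {0,1}^K as n_0, ..., n_{2^K−1}. Then for every ε > 0 there exist biases b_i and weight vectors w_i ∈ ℝ^K (i = 0,...,2^K−1) such that the matrix F with entries F_{ij} = σ(b_i + w_i^T n_j) satisfies |F_{ij} − δ_{ij}| < ε for all i, j. -/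
/-!
Put `s(x) = 2x - 1 ∈ {±1}^K` for a vertex `x` of the cube. The neuron with weights `2θ s(nᵢ)` and
bias `θ (1 - K - Σₖ s(nᵢ)ₖ)` receives the input `θ (1 - 2 d(nᵢ, nⱼ))` at `nⱼ`, where `d` is the
Hamming distance: this is `θ` on the diagonal and at most `-θ` off it. Taking `θ` so large that
`σ` is `ε`-close to `1` on `[θ, ∞)` and to `0` on `(-∞, -θ]` gives the matrix.
-/

open Finset Filter

def boolSign (b : Bool) : ℝ := if b then 1 else -1

lemma two_mul_boolSign_mul_indicator (a c : Bool) :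
    2 * boolSign a * (if c then 1 else 0) = boolSign a + 1 - 2 * (if a ≠ c then 1 else 0) := by
  cases a <;> cases c <;> norm_num [boolSign]

lemma sum_ite_ne_eq_hammingDist {ι : Type*} [Fintype ι] (x y : ι → Bool) :
    ∑ k, (if x k ≠ y k then (1 : ℝ) else 0) = hammingDist x y := by
  rw [sum_boole, hammingDist]

lemma bias_add_sum_weight_mul_indicator {ι : Type*} [Fintype ι] (θ : ℝ) (x y : ι → Bool) :
    θ * (1 - Fintype.card ι - ∑ k, boolSign (x k)) +
        ∑ k, 2 * θ * boolSign (x k) * (if y k then 1 else 0) =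
      θ * (1 - 2 * hammingDist x y) := by
  have hsum : ∑ k, 2 * boolSign (x k) * (if y k then (1 : ℝ) else 0) =
      ∑ k, boolSign (x k) + Fintype.card ι - 2 * hammingDist x y := by
    simp only [two_mul_boolSign_mul_indicator, sum_sub_distrib, sum_add_distrib, ← mul_sum,
      sum_ite_ne_eq_hammingDist, sum_const, card_univ, nsmul_one]
  have hfactor : ∑ k, 2 * θ * boolSign (x k) * (if y k then (1 : ℝ) else 0) =
      θ * ∑ k, 2 * boolSign (x k) * (if y k then (1 : ℝ) else 0) := by
    rw [mul_sum]
    exact sum_congr rfl fun k _ => by ring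
  rw [hfactor, hsum]
  ring

lemma exists_nonneg_forall_sigmoid_close {σ : ℝ → ℝ} (h0 : Tendsto σ atBot (nhds 0))
    (h1 : Tendsto σ atTop (nhds 1)) {ε : ℝ} (hε : 0 < ε) :
    ∃ θ, 0 ≤ θ ∧ ∀ t, θ ≤ t → |σ t - 1| < ε ∧ |σ (-t)| < ε := by
  have hnear : ∀ᶠ t in atTop, |σ t - 1| < ε ∧ |σ (-t)| < ε := by
    have hneg := tendsto_neg_atTop_atBot.eventually (h0.eventually (Metric.ball_mem_nhds 0 hε))
    filter_upwards [h1.eventually (Metric.ball_mem_nhds 1 hε), hneg] with t ht hnt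
    simpa [Real.dist_eq] using And.intro ht hnt
  exact ((eventually_ge_atTop 0).and (eventually_forall_ge_atTop.2 hnear)).exists

theorem fnn_near_identity_matrix_general
    (K : ℕ)
    (σ : ℝ → ℝ)
    (h0 : Filter.Tendsto σ Filter.atBot (nhds 0))
    (h1 : Filter.Tendsto σ Filter.atTop (nhds 1))
    (v : (Fin K → Bool) → (Fin K → ℝ))
    (hv : ∀ j k, v j k = if j k then 1 else 0)
    (ε : ℝ) (hε : 0 < ε) :
    ∃ (b : (Fin K → Bool) → ℝ) (w : (Fin K → Bool) → (Fin K → ℝ)),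
      ∀ i j : Fin K → Bool,
        |σ (b i + ∑ k, w i k * v j k) - (if i = j then 1 else 0)| < ε := by
  obtain ⟨θ, hθ, hclose⟩ := exists_nonneg_forall_sigmoid_close h0 h1 hε
  refine ⟨fun i => θ * (1 - K - ∑ k, boolSign (i k)), fun i k => 2 * θ * boolSign (i k), ?_⟩
  intro i j
  have hinput := bias_add_sum_weight_mul_indicator θ i j
  rw [Fintype.card_fin] at hinput
  simp only [hv, hinput]
  by_cases hij : i = j
  · simpa [hij] using (hclose θ le_rfl).1
  · have hdist : (1 : ℝ) ≤ hammingDist i j := by exact_mod_cast hammingDist_pos.2 hij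
    have hle : θ ≤ -(θ * (1 - 2 * hammingDist i j)) := by nlinarith
    simpa [hij] using (hclose _ hle).2

theorem fnn_near_identity_matrix
    (K : ℕ) (hK : 0 < K)
    (σ : ℝ → ℝ)
    (h0 : Filter.Tendsto σ Filter.atBot (nhds 0))
    (h1 : Filter.Tendsto σ Filter.atTop (nhds 1))
    (v : (Fin K → Bool) → (Fin K → ℝ))
    (hv : ∀ j k, v j k = if j k then 1 else 0)
    (ε : ℝ) (hε : 0 < ε) :
    ∃ (b : (Fin K → Bool) → ℝ) (w : (Fin K → Bool) → (Fin K → ℝ)),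
      ∀ i j : Fin K → Bool,
        |σ (b i + ∑ k, w i k * v j k) - (if i = j then 1 else 0)| < ε :=
  fnn_near_identity_matrix_general K σ h0 h1 v hv ε hε
end

section
/- Let φ : ℝ → ℝ be continuous with range contained in (−1,1) and lim_{x→+∞} φ(x) = 1. Then for every function Ψ : {0,1}^K → [−1,1] and every ε > 0, there exist N_h ∈ ℕ, biases b_α ∈ ℝ and weight vectors w_α ∈ ℝ^K such that |∏_{α=1}^{N_h} φ(b_α + w_α^T n) − Ψ(n)| < ε for every n ∈ {0,1}^K. Moreover, N_h = 2^K suffices. -/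
/-!
Index the `2 ^ K` neurons by the binary configurations `m`. On binary inputs the Hamming
distance `d(n, m) = ∑ k, |n k - m k|` is an affine function of `n`, so neuron `m` can compute
`φ (x_m + t_m · d(n, m))`.
Choose `φ x_m ≈ Ψ m` (possible since `φ` has range `(-1, 1)`), and `t_m` so large that every other
binary input lands where `φ > 1 - δ`. At a binary input `n` the factor of neuron `n` is then
`≈ Ψ n` and all other `2 ^ K - 1` factors lie in `[1 - δ, 1)`, so the product is within
`2 ^ K · δ` of `Ψ n` by Bernoulli's inequality.
-/

open Finset Set Filter Topology

section ProductBound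

variable {ι : Type*} {δ : ℝ}

theorem one_sub_card_mul_le_prod {s : Finset ι} {f : ι → ℝ} (hδ : δ ≤ 1)
    (hf : ∀ i ∈ s, 1 - δ ≤ f i) : 1 - #s * δ ≤ ∏ i ∈ s, f i :=
  calc 1 - #s * δ = 1 + #s * (-δ) := by ring
    _ ≤ (1 + -δ) ^ #s := one_add_mul_le_pow (by linarith) _
    _ = ∏ _i ∈ s, (1 - δ) := by rw [prod_const, sub_eq_add_neg]
    _ ≤ ∏ i ∈ s, f i := prod_le_prod (fun _ _ => by linarith) hf

theorem abs_prod_sub_le_of_forall_ne [Fintype ι] [DecidableEq ι] {f : ι → ℝ} (i : ι)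
    (hδ₀ : 0 ≤ δ) (hδ : δ ≤ 1) (hfi : |f i| ≤ 1) (hf : ∀ j ≠ i, f j ∈ Icc (1 - δ) 1) :
    |∏ j, f j - f i| ≤ Fintype.card ι * δ := by
  rw [← mul_prod_erase univ f (mem_univ i)]
  set P := ∏ j ∈ univ.erase i, f j
  have hmem : ∀ j ∈ univ.erase i, f j ∈ Icc (1 - δ) 1 := fun j hj => hf j (ne_of_mem_erase hj)
  have hP_le : P ≤ 1 :=
    prod_le_one (fun j hj => by linarith [(hmem j hj).1]) (fun j hj => (hmem j hj).2)
  have hP_ge : 1 - #(univ.erase i) * δ ≤ P := one_sub_card_mul_le_prod hδ fun j hj => (hmem j hj).1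
  have hcard : (#(univ.erase i) : ℝ) ≤ Fintype.card ι := by exact_mod_cast card_erase_le
  calc |f i * P - f i| = |f i| * (1 - P) := by
        rw [← mul_sub_one, abs_mul, abs_sub_comm P 1, abs_of_nonneg (sub_nonneg.mpr hP_le)]
    _ ≤ 1 * (1 - P) := by gcongr
    _ ≤ Fintype.card ι * δ := by nlinarith [mul_le_mul_of_nonneg_right hcard hδ₀]

end ProductBound

section Binary

variable {ι : Type*}

theorem one_sub_two_mul_mul_add_eq_abs_sub {c x : ℝ} (hc : c = 0 ∨ c = 1) (hx : x = 0 ∨ x = 1) :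
    (1 - 2 * c) * x + c = |x - c| := by
  rcases hc with rfl | rfl <;> rcases hx with rfl | rfl <;> norm_num

theorem sum_add_sum_mul_eq_sum_abs_sub [Fintype ι] {c n : ι → ℝ} (hc : ∀ k, c k = 0 ∨ c k = 1)
    (hn : ∀ k, n k = 0 ∨ n k = 1) :
    ∑ k, c k + ∑ k, (1 - 2 * c k) * n k = ∑ k, |n k - c k| := by
  rw [← sum_add_distrib]
  exact sum_congr rfl fun k _ => by rw [add_comm, one_sub_two_mul_mul_add_eq_abs_sub (hc k) (hn k)]

theorem one_le_sum_abs_sub_of_ne [Fintype ι] {c n : ι → ℝ} (hc : ∀ k, c k = 0 ∨ c k = 1)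
    (hn : ∀ k, n k = 0 ∨ n k = 1) (hne : n ≠ c) : 1 ≤ ∑ k, |n k - c k| := by
  obtain ⟨k, hk⟩ := Function.ne_iff.mp hne
  calc (1 : ℝ) = |n k - c k| := by
        rcases hc k with h | h <;> rcases hn k with h' | h' <;> simp_all
    _ ≤ ∑ j, |n j - c j| :=
        single_le_sum (f := fun j => |n j - c j|) (fun j _ => abs_nonneg _) (mem_univ k)

def binaryPoint (m : ι → Fin 2) : ι → ℝ := fun k => (m k : ℕ)

theorem binaryPoint_mem (m : ι → Fin 2) (k : ι) : binaryPoint m k = 0 ∨ binaryPoint m k = 1 := by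
  rcases (by omega : (m k : ℕ) = 0 ∨ (m k : ℕ) = 1) with h | h <;> simp [binaryPoint, h]

theorem binaryPoint_injective : Function.Injective (binaryPoint (ι := ι)) := fun _ _ h =>
  funext fun k => Fin.val_injective (Nat.cast_injective (congrFun h k))

theorem exists_binaryPoint_eq {n : ι → ℝ} (hn : ∀ k, n k = 0 ∨ n k = 1) :
    ∃ m, binaryPoint m = n :=
  ⟨fun k => if n k = 1 then 1 else 0,
    funext fun k => by rcases hn k with h | h <;> simp [binaryPoint, h]⟩

end Binary

theorem exists_abs_sub_lt_of_Ioo_subset_range {α : Type*} {f : α → ℝ} {a b v ε : ℝ} (hab : a < b)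
    (hf : Ioo a b ⊆ range f) (hv : v ∈ Icc a b) (hε : 0 < ε) : ∃ x, |f x - v| < ε := by
  rw [← closure_Ioo hab.ne] at hv
  obtain ⟨y, hy, hvy⟩ := Metric.mem_closure_iff.mp hv ε hε
  obtain ⟨x, rfl⟩ := hf hy
  exact ⟨x, by rwa [Real.dist_eq, abs_sub_comm] at hvy⟩

theorem le_add_max_mul {x T d : ℝ} (hd : 1 ≤ d) : T ≤ x + max 0 (T - x) * d := by
  nlinarith [le_max_left 0 (T - x), le_max_right 0 (T - x)]

theorem exists_nps_approx_indexed_by_binary {ι : Type*} [Fintype ι] [DecidableEq ι] {φ : ℝ → ℝ}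
    (hrange : range φ = Set.Ioo (-1) 1) (h1 : Tendsto φ atTop (𝓝 1)) (Ψ : (ι → ℝ) → ℝ)
    (hΨ : ∀ n : ι → ℝ, (∀ k, n k = 0 ∨ n k = 1) → Ψ n ∈ Set.Icc (-1) 1) {ε : ℝ} (hε : 0 < ε) :
    ∃ (b : (ι → Fin 2) → ℝ) (w : (ι → Fin 2) → ι → ℝ), ∀ n : ι → ℝ, (∀ k, n k = 0 ∨ n k = 1) →
      |(∏ m, φ (b m + ∑ k, w m k * n k)) - Ψ n| < ε := by
  have hφ : ∀ x, φ x ∈ Set.Ioo (-1) 1 := fun x => hrange ▸ mem_range_self x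
  set N := Fintype.card (ι → Fin 2)
  set δ := min (ε / (2 * N)) 1
  have hN : (0 : ℝ) < N := by exact_mod_cast Fintype.card_pos
  have hδ : 0 < δ := lt_min (by positivity) one_pos
  have hNδ : N * δ ≤ ε / 2 :=
    calc N * δ ≤ N * (ε / (2 * N)) := by gcongr; exact min_le_left _ _
      _ = ε / 2 := by field_simp
  obtain ⟨T, hT⟩ := eventually_atTop.mp (h1.eventually (Ioi_mem_nhds (by linarith : 1 - δ < 1)))
  choose x hx using fun m => exists_abs_sub_lt_of_Ioo_subset_range (by norm_num) hrange.ge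
    (hΨ _ (binaryPoint_mem m)) (half_pos hε)
  set t := fun m => max 0 (T - x m)
  refine ⟨fun m => x m + t m * ∑ k, binaryPoint m k, fun m k => t m * (1 - 2 * binaryPoint m k),
    fun n hn => ?_⟩
  obtain ⟨m₀, rfl⟩ := exists_binaryPoint_eq hn
  have harg : ∀ m, x m + t m * ∑ k, binaryPoint m k
      + ∑ k, t m * (1 - 2 * binaryPoint m k) * binaryPoint m₀ k
      = x m + t m * ∑ k, |binaryPoint m₀ k - binaryPoint m k| := by
    intro m
    simp only [mul_assoc, ← mul_sum]
    rw [← sum_add_sum_mul_eq_sum_abs_sub (binaryPoint_mem m) hn]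
    ring
  simp only [harg]
  have hfar : ∀ m ≠ m₀, φ (x m + t m * ∑ k, |binaryPoint m₀ k - binaryPoint m k|) ∈ Icc (1 - δ) 1 :=
    fun m hm => ⟨(hT _ (le_add_max_mul (one_le_sum_abs_sub_of_ne (binaryPoint_mem m) hn
      (binaryPoint_injective.ne hm.symm)))).le, (hφ _).2.le⟩
  have hnear := abs_prod_sub_le_of_forall_ne m₀ hδ.le (min_le_right _ _)
    (abs_le.mpr ⟨(hφ _).1.le, (hφ _).2.le⟩) hfar
  simp only [sub_self, abs_zero, sum_const_zero, mul_zero, add_zero] at hnear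
  calc _ ≤ |∏ m, φ (x m + t m * ∑ k, |binaryPoint m₀ k - binaryPoint m k|) - φ (x m₀)|
        + |φ (x m₀) - Ψ (binaryPoint m₀)| := abs_sub_le _ _ _
    _ < ε / 2 + ε / 2 := add_lt_add_of_le_of_lt (hnear.trans hNδ) (hx m₀)
    _ = ε := add_halves ε

theorem nps_universal_approximation_general
    (K : ℕ)
    (φ : ℝ → ℝ)
    (hrange : Set.range φ = Set.Ioo (-1 : ℝ) 1)
    (h1 : Filter.Tendsto φ Filter.atTop (nhds 1))
    (Ψ : (Fin K → ℝ) → ℝ)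
    (hΨ : ∀ n : Fin K → ℝ, (∀ k, n k = 0 ∨ n k = 1) → Ψ n ∈ Set.Icc (-1 : ℝ) 1)
    (ε : ℝ) (hε : 0 < ε) :
    ∃ (b : Fin (2 ^ K) → ℝ) (w : Fin (2 ^ K) → Fin K → ℝ),
      ∀ n : Fin K → ℝ, (∀ k, n k = 0 ∨ n k = 1) →
        |(∏ α, φ (b α + ∑ k, w α k * n k)) - Ψ n| < ε := by
  obtain ⟨b, w, hbw⟩ := exists_nps_approx_indexed_by_binary hrange h1 Ψ hΨ hε
  let e : (Fin K → Fin 2) ≃ Fin (2 ^ K) := finFunctionFinEquiv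
  refine ⟨b ∘ e.symm, w ∘ e.symm, fun n hn => ?_⟩
  simp only [Function.comp_apply]
  rw [e.symm.prod_comp fun m => φ (b m + ∑ k, w m k * n k)]
  exact hbw n hn

theorem nps_universal_approximation
    (K : ℕ) (hK : 0 < K)
    (φ : ℝ → ℝ) (hφc : Continuous φ)
    (hrange : Set.range φ = Set.Ioo (-1 : ℝ) 1)
    (h1 : Filter.Tendsto φ Filter.atTop (nhds 1))
    (Ψ : (Fin K → ℝ) → ℝ)
    (hΨ : ∀ n : Fin K → ℝ, (∀ k, n k = 0 ∨ n k = 1) → Ψ n ∈ Set.Icc (-1 : ℝ) 1)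
    (ε : ℝ) (hε : 0 < ε) :
    ∃ (b : Fin (2 ^ K) → ℝ) (w : Fin (2 ^ K) → Fin K → ℝ),
      ∀ n : Fin K → ℝ, (∀ k, n k = 0 ∨ n k = 1) →
        |(∏ α, φ (b α + ∑ k, w α k * n k)) - Ψ n| < ε :=
  nps_universal_approximation_general K φ hrange h1 Ψ hΨ ε hε
end

section
/- Let φ : ℝ → ℝ be continuous, with φ(x) → 1 as x → +∞, and suppose x_0 ∈ ℝ with |φ(x_0) − t| < ε/2 for a target t. Fix a vertex n_i ∈ {0,1}^K. Then there exist w ∈ ℝ^K and b ∈ ℝ such that φ(b + w^T n_i) = φ(x_0) and |φ(b + w^T n_j) − 1| < ε for all vertices n_j ≠ n_i. -/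
/-!
Tilt the affine functional by the separating direction `u = 1 - 2 nᵢ`: on binary vectors
`(1 - 2 p) (q - p) = (q - p)²`, so `u ⬝ (nⱼ - nᵢ) ≥ 1` for every other vertex. With `w = θ u` and
`b = x₀ - w ⬝ nᵢ`, the vertex `nᵢ` is sent to `x₀` while every other vertex is sent to at least
`x₀ + θ`, which for large `θ` lies where `φ` is already `ε`-close to its limit `1`.
-/

open Filter Topology Matrix

lemma one_sub_two_mul_mul_sub_eq_sq {p q : ℝ} (hp : p = 0 ∨ p = 1) (hq : q = 0 ∨ q = 1) :
    (1 - 2 * p) * (q - p) = (q - p) ^ 2 := by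
  rcases hp with rfl | rfl <;> rcases hq with rfl | rfl <;> norm_num

lemma one_le_dotProduct_sub_of_binary {ι : Type*} [Fintype ι] {p q : ι → ℝ}
    (hp : ∀ k, p k = 0 ∨ p k = 1) (hq : ∀ k, q k = 0 ∨ q k = 1) (hne : q ≠ p) :
    1 ≤ (fun k => 1 - 2 * p k) ⬝ᵥ (q - p) := by
  obtain ⟨k, hk⟩ := Function.ne_iff.mp hne
  have hk_one : (q k - p k) ^ 2 = 1 := by
    rcases hp k with h | h <;> rcases hq k with h' | h' <;> simp_all
  calc (1 : ℝ) = (q k - p k) ^ 2 := hk_one.symm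
    _ ≤ ∑ j, (q j - p j) ^ 2 :=
      Finset.single_le_sum (f := fun j => (q j - p j) ^ 2) (fun j _ => sq_nonneg _)
        (Finset.mem_univ k)
    _ = (fun k => 1 - 2 * p k) ⬝ᵥ (q - p) := by
      simp only [dotProduct, Pi.sub_apply, one_sub_two_mul_mul_sub_eq_sq (hp _) (hq _)]

lemma exists_selector_of_separating {ι : Type*} [Fintype ι] {φ : ℝ → ℝ}
    (hφ : Tendsto φ atTop (𝓝 1)) {ε : ℝ} (hε : 0 < ε) (x₀ : ℝ) {p u : ι → ℝ}
    {S : Set (ι → ℝ)} (hu : ∀ q ∈ S, 1 ≤ u ⬝ᵥ (q - p)) :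
    ∃ (w : ι → ℝ) (b : ℝ), φ (b + w ⬝ᵥ p) = φ x₀ ∧ ∀ q ∈ S, |φ (b + w ⬝ᵥ q) - 1| < ε := by
  obtain ⟨M, hM⟩ := eventually_atTop.mp (hφ.eventually (Metric.ball_mem_nhds 1 hε))
  set θ := max (M - x₀) 0
  refine ⟨θ • u, x₀ - θ * u ⬝ᵥ p, by simp, fun q hq => ?_⟩
  have hshift : x₀ - θ * u ⬝ᵥ p + θ • u ⬝ᵥ q = x₀ + θ * u ⬝ᵥ (q - p) := by
    simp only [smul_dotProduct, dotProduct_sub, smul_eq_mul]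
    ring
  have hM_le : M ≤ x₀ + θ * u ⬝ᵥ (q - p) := by
    have hθ : M - x₀ ≤ θ := le_max_left _ _
    nlinarith [le_max_right (M - x₀) 0, hu q hq]
  rw [hshift, ← Real.dist_eq]
  exact hM _ hM_le

theorem nps_selector_neuron_general
    (K : ℕ)
    (φ : ℝ → ℝ)
    (h1 : Filter.Tendsto φ Filter.atTop (nhds 1))
    (x₀ ε : ℝ) (hε : 0 < ε)
    (ni : Fin K → ℝ) (hni : ∀ k, ni k = 0 ∨ ni k = 1) :
    ∃ (w : Fin K → ℝ) (b : ℝ),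
      φ (b + ∑ k, w k * ni k) = φ x₀ ∧
      ∀ nj : Fin K → ℝ, (∀ k, nj k = 0 ∨ nj k = 1) → nj ≠ ni →
        |φ (b + ∑ k, w k * nj k) - 1| < ε := by
  obtain ⟨w, b, hni_sent, hothers⟩ :=
    exists_selector_of_separating h1 hε x₀ (S := {q | (∀ k, q k = 0 ∨ q k = 1) ∧ q ≠ ni})
      fun q hq => one_le_dotProduct_sub_of_binary hni hq.1 hq.2
  exact ⟨w, b, hni_sent, fun nj hnj hne => hothers nj ⟨hnj, hne⟩⟩

theorem nps_selector_neuron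
    (K : ℕ) (hK : 0 < K)
    (φ : ℝ → ℝ) (hφc : Continuous φ)
    (h1 : Filter.Tendsto φ Filter.atTop (nhds 1))
    (x₀ t ε : ℝ) (hε : 0 < ε)
    (hx₀ : |φ x₀ - t| < ε / 2)
    (ni : Fin K → ℝ) (hni : ∀ k, ni k = 0 ∨ ni k = 1) :
    ∃ (w : Fin K → ℝ) (b : ℝ),
      φ (b + ∑ k, w k * ni k) = φ x₀ ∧
      ∀ nj : Fin K → ℝ, (∀ k, nj k = 0 ∨ nj k = 1) → nj ≠ ni →
        |φ (b + ∑ k, w k * nj k) - 1| < ε :=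
  nps_selector_neuron_general K φ h1 x₀ ε hε ni hni
end

section
/- Let φ : ℝ → ℝ be continuous at x_0 with φ(x) > 0 for x ∈ (x_0 − ε₀, x_0) and φ(x) < 0 for x ∈ (x_0, x_0 + ε₀) for some ε₀ > 0. Fix a vertex n_i ∈ {0,1}^K. Then there exist w ∈ ℝ^K and b ∈ ℝ such that φ(b + w^T n_i) < 0 and φ(b + w^T n_j) > 0 for all vertices n_j ≠ n_i. -/
theorem nps_sign_selector_neuron
    (K : ℕ) (hK : 0 < K)
    (φ : ℝ → ℝ) (x₀ ε₀ : ℝ) (hε₀ : 0 < ε₀)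
    (hφc : ContinuousAt φ x₀)
    (hpos : ∀ x ∈ Set.Ioo (x₀ - ε₀) x₀, 0 < φ x)
    (hneg : ∀ x ∈ Set.Ioo x₀ (x₀ + ε₀), φ x < 0)
    (ni : Fin K → ℝ) (hni : ∀ k, ni k = 0 ∨ ni k = 1) :
    ∃ (w : Fin K → ℝ) (b : ℝ),
      φ (b + ∑ k, w k * ni k) < 0 ∧
      ∀ nj : Fin K → ℝ, (∀ k, nj k = 0 ∨ nj k = 1) → nj ≠ ni →
        0 < φ (b + ∑ k, w k * nj k) := by
  have hKr : (1:ℝ) ≤ (K : ℝ) := by exact_mod_cast hK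
  have hKr0 : (0:ℝ) < (K : ℝ) := by linarith
  set θ : ℝ := ε₀ / (2 * (K : ℝ)) with hθdef
  set δ : ℝ := ε₀ / (4 * (K : ℝ)) with hδdef
  have hθ : 0 < θ := by positivity
  have hδ : 0 < δ := by positivity
  have hδθ : δ < θ := by
    rw [hθdef, hδdef, div_lt_div_iff₀ (by positivity) (by positivity)]
    nlinarith
  have hθK : θ * (K : ℝ) = ε₀ / 2 := by
    rw [hθdef]; field_simp
  have hδε : δ < ε₀ := by nlinarith [hθK]
  set S : ℝ := ∑ k, ni k with hS
  refine ⟨fun k => θ * (2 * ni k - 1), x₀ + δ - θ * S, ?_, ?_⟩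
  · have h1 : ∀ k, θ * (2 * ni k - 1) * ni k = θ * ni k := fun k => by
      rcases hni k with h | h <;> rw [h] <;> ring
    have hsum : ∑ k, θ * (2 * ni k - 1) * ni k = θ * S := by
      rw [hS, Finset.mul_sum]
      exact Finset.sum_congr rfl fun k _ => h1 k
    rw [hsum]
    apply hneg
    constructor <;> [skip; skip] <;> simp <;> linarith
  · intro nj hnj hne
    set d : Fin K → ℝ := fun k => ni k - (2 * ni k - 1) * nj k with hd
    have hd01 : ∀ k, d k = 0 ∨ d k = 1 := fun k => by
      rcases hni k with h | h <;> rcases hnj k with h' | h' <;>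
        simp [hd, h, h'] <;> norm_num
    have hd0 : ∀ k, 0 ≤ d k := fun k => by rcases hd01 k with h | h <;> rw [h] <;> norm_num
    obtain ⟨k0, hk0⟩ := Function.ne_iff.mp hne
    have hdk0 : d k0 = 1 := by
      rcases hni k0 with h | h <;> rcases hnj k0 with h' | h' <;>
        simp [hd, h, h'] <;> simp [h, h'] at hk0 <;> norm_num
    set g : ℝ := ∑ k, d k with hg
    have hg1 : 1 ≤ g := by
      rw [hg, ← hdk0]
      exact Finset.single_le_sum (fun k _ => hd0 k) (Finset.mem_univ k0)
    have hgK : g ≤ (K : ℝ) := by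
      have : g ≤ ∑ _k : Fin K, (1:ℝ) :=
        Finset.sum_le_sum fun k _ => by rcases hd01 k with h | h <;> rw [h] <;> norm_num
      simpa using this
    have harg : x₀ + δ - θ * S + ∑ k, θ * (2 * ni k - 1) * nj k = x₀ + δ - θ * g := by
      rw [hg, hd, hS, Finset.mul_sum, Finset.mul_sum]
      rw [show (∑ k, θ * (ni k - (2 * ni k - 1) * nj k))
            = ∑ k, (θ * ni k - θ * ((2 * ni k - 1) * nj k)) from
          Finset.sum_congr rfl fun k _ => by ring, Finset.sum_sub_distrib]
      rw [show ∀ a b : ℝ, ∑ k, θ * (2 * ni k - 1) * nj k = ∑ k, θ * ((2 * ni k - 1) * nj k) from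
        fun a b => Finset.sum_congr rfl fun k _ => by ring]
      ring
      · exact 0
      · exact 0
    rw [show (x₀ + δ - θ * S + ∑ k, θ * (2 * ni k - 1) * nj k) = x₀ + δ - θ * g from harg]
    apply hpos
    have h1 : θ * 1 ≤ θ * g := by nlinarith
    have h2 : θ * g ≤ θ * (K : ℝ) := by nlinarith
    rw [Set.mem_Ioo]
    constructor <;> nlinarith [hθK]
end
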